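/- In a multiplicity-free semi-simple tensor system over a commutative ring R, fix an L-tuple λ̃ = (λ_1,…,λ_L), an element ν ∈ I, and 1 ≤ i ≤ L−2. If ν acts one-dimensionally on the left of λ_{i+2}, then for every ν' ∈ I one has, as operators on H_{λ̃}, p_i^{(ν)} p_{i+1}^{(ν')} p_i^{(ν)} = (F^{λ_iλ_{i+1}λ_{i+2}}_{φ^l_ν(λ_{i+2})})^ν_{ν'} (F̄^{λ_iλ_{i+1}λ_{i+2}}_{φ^l_ν(λ_{i+2})})^{ν'}_ν · p_i^{(ν)}. -/

import Mathlib

/-!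
Both sides vanish unless `μ` and `μ'` agree away from the sites `i` and `i + 1`. If they do, the
left side is a prefactor times a sum, over the label `t` at site `i`, of a product of four
F-moves. Inserting the completeness relation of the F-move `F^{μ_{i-1} λ_i ν'}` splits this sum
over a further label `k`, and the pentagon equation and its inverse rewrite both halves as
products of F-moves in which `k` is a fusion channel of `ν ⊗ λ_{i+2}`. Since `ν` acts
one-dimensionally on `λ_{i+2}`, only `k = φ` survives, and the completeness relation of
`F^{μ_{i-1} ν λ_{i+2}}`, now a single term, yields the factor `δ_{μ_{i+1} μ'_{i+1}}` of
`p_i^{(ν)}`.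
-/

open scoped Classical

noncomputable section

/-- A multiplicity-free semi-simple tensor system over a commutative ring `R`,
with index set `I`, fusion constants `N`, and F-moves `F`, `Fbar`.
`F a b c d e f` denotes `(F^{abc}_d)^e_f` and `Fbar a b c d f e` denotes `(F̄^{abc}_d)^f_e`. -/
structure TensorSystem (R : Type*) [CommRing R] (I : Type*) where
  N : I → I → I → ℕ
  F : I → I → I → I → I → I → R
  Fbar : I → I → I → I → I → I → R
  N_le_one : ∀ a b c, N a b c ≤ 1
  N_assoc : ∀ a b c d, (∑ᶠ e, N a b e * N e c d) = ∑ᶠ e, N a e d * N b c e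
  N_finite : ∀ a b, (Function.support fun c => N a b c).Finite
  F_vanish : ∀ a b c d e f, N a b e * N b c f * N a f d * N e c d = 0 → F a b c d e f = 0
  Fbar_vanish : ∀ a b c d e f, N a b e * N b c f * N a f d * N e c d = 0 → Fbar a b c d f e = 0
  pentagon : ∀ a b c d e f g k l,
      (∑ᶠ h, F a b c g f h * F a h d e g k * F b c d k h l) = F f c d e g l * F a b l e f k
  F_Fbar : ∀ a b c d e e',
      (∑ᶠ f, F a b c d e f * Fbar a b c d f e')
        = (if e = e' then (1 : R) else 0) * (N a b e : R) * (N e c d : R)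
  Fbar_F : ∀ a b c d f f',
      (∑ᶠ e, Fbar a b c d f' e * F a b c d e f)
        = (if f = f' then (1 : R) else 0) * (N b c f : R) * (N a f d : R)

namespace TensorSystem

variable {R : Type*} [CommRing R] {I : Type*}

open Fin.NatCast in
/-- `μ = (μ₀, μ₁, …, μ_L)` is a fusion path for the tuple `λ̃ = (lam 1, …, lam L)`:
`μ₀ ∈ I0` and `N_{μ_{i-1} λ_i}^{μ_i} = 1` for `1 ≤ i ≤ L`. -/
def IsPath (TS : TensorSystem R I) (L : ℕ) (I0 : Set I) (lam : ℕ → I)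
    (μ : Fin (L + 1) → I) : Prop :=
  μ 0 ∈ I0 ∧ ∀ i : ℕ, 1 ≤ i → i ≤ L →
    TS.N (μ ((i - 1 : ℕ) : Fin (L + 1))) (lam i) (μ ((i : ℕ) : Fin (L + 1))) = 1

open Fin.NatCast in
/-- Matrix element `⟨μ'| p_i^{(ν)} |μ⟩` of the two-site projection operator. -/
def pMat (TS : TensorSystem R I) (L : ℕ) (lam : ℕ → I) (i : ℕ) (ν : I)
    (μ' μ : Fin (L + 1) → I) : R :=
  (∏ j ∈ Finset.univ.erase ((i : ℕ) : Fin (L + 1)), if μ j = μ' j then (1 : R) else 0)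
    * TS.Fbar (μ ((i - 1 : ℕ) : Fin (L + 1))) (lam i) (lam (i + 1))
        (μ ((i + 1 : ℕ) : Fin (L + 1))) ν (μ' ((i : ℕ) : Fin (L + 1)))
    * TS.F (μ ((i - 1 : ℕ) : Fin (L + 1))) (lam i) (lam (i + 1))
        (μ ((i + 1 : ℕ) : Fin (L + 1))) (μ ((i : ℕ) : Fin (L + 1))) ν

/-- Matrix elements of the composition of two operators on `H_{λ̃}`,
summing over the fusion-path basis. -/
def mulMat (TS : TensorSystem R I) (L : ℕ) (I0 : Set I) (lam : ℕ → I)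
    (A B : (Fin (L + 1) → I) → (Fin (L + 1) → I) → R)
    (μ' μ : Fin (L + 1) → I) : R :=
  ∑ᶠ μ'' ∈ {x : Fin (L + 1) → I | TS.IsPath L I0 lam x}, A μ' μ'' * B μ'' μ

/-- Two operators on `H_{λ̃}` are equal iff all their matrix elements between
fusion-path basis vectors agree. -/
def MatEqOn (TS : TensorSystem R I) (L : ℕ) (I0 : Set I) (lam : ℕ → I)
    (A B : (Fin (L + 1) → I) → (Fin (L + 1) → I) → R) : Prop :=
  ∀ μ' μ : Fin (L + 1) → I, TS.IsPath L I0 lam μ' → TS.IsPath L I0 lam μ → A μ' μ = B μ' μ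

/-- Extended fusion numbers `N_{a a₁ ⋯ aₙ}^b` along a list `[a₁, …, aₙ]`. -/
def Nseq (TS : TensorSystem R I) : I → List I → I → ℕ
  | a, [], b => if a = b then 1 else 0
  | a, c :: rest, b => ∑ᶠ x, TS.N a c x * Nseq TS x rest b

/-- `ν` acts one-dimensionally on the left of `μ`. -/
def ActsOneDimLeft (TS : TensorSystem R I) (ν μ : I) : Prop :=
  (∑ᶠ μ' : I, TS.N ν μ μ') = 1

/-- `ν` acts one-dimensionally on the right of `μ`. -/
def ActsOneDimRight (TS : TensorSystem R I) (ν μ : I) : Prop :=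
  (∑ᶠ μ' : I, TS.N μ ν μ') = 1

end TensorSystem

/-- Matrix elements of the identity operator. -/
def deltaMat {R : Type*} [CommRing R] {I : Type*} (L : ℕ)
    (μ' μ : Fin (L + 1) → I) : R :=
  ∏ j : Fin (L + 1), if μ j = μ' j then (1 : R) else 0

/-- Scalar multiple of a matrix of operator matrix elements. -/
def smulMat {R : Type*} [CommRing R] {α : Sort*} (c : R) (A : α → α → R) : α → α → R :=
  fun x y => c * A x y

lemma natCast_mul_eq_self_of_imp {R : Type*} [Semiring R] {n : ℕ} {r : R}
    (h : r ≠ 0 → n = 1) : (n : R) * r = r := by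
  by_cases hr : r = 0
  · simp [hr]
  · simp [h hr]

lemma Finset.sum_mul_ite_eq_of_natCast_eq_one {R ι : Type*} [Semiring R] [DecidableEq ι]
    {S : Finset ι} (X : ι → R) (m n : ι → ℕ) (x : ι)
    (hX : X x ≠ 0 → x ∈ S ∧ m x = 1 ∧ n x = 1) :
    ∑ y ∈ S, X y * ((if y = x then 1 else 0) * (m y : R) * (n y : R)) = X x := by
  simp only [ite_mul, one_mul, zero_mul, mul_ite, mul_zero, Finset.sum_ite_eq']
  by_cases h : X x = 0
  · simp [h]
  · obtain ⟨hS, hm, hn⟩ := hX h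
    simp [hS, hm, hn]

lemma Finset.sum_comm₄ {R α β γ δ : Type*} [AddCommMonoid R] (s : Finset α) (t : Finset β)
    (u : Finset γ) (v : Finset δ) (F : α → β → γ → δ → R) :
    ∑ a ∈ s, ∑ b ∈ t, ∑ c ∈ u, ∑ d ∈ v, F a b c d =
      ∑ c ∈ u, ∑ d ∈ v, ∑ a ∈ s, ∑ b ∈ t, F a b c d := by
  calc _ = ∑ p ∈ s ×ˢ t, ∑ q ∈ u ×ˢ v, F p.1 p.2 q.1 q.2 := by simp only [Finset.sum_product]
    _ = ∑ q ∈ u ×ˢ v, ∑ p ∈ s ×ˢ t, F p.1 p.2 q.1 q.2 := Finset.sum_comm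
    _ = _ := by simp only [Finset.sum_product]

lemma finsum_mem_eq_finsum_of_support_subset {α M : Type*} [AddCommMonoid M] {f : α → M}
    {s : Set α} (h : Function.support f ⊆ s) : ∑ᶠ x ∈ s, f x = ∑ᶠ x, f x := by
  rw [finsum_mem_inter_support_eq' f s Set.univ fun x hx => by simp [h hx], finsum_mem_univ]

lemma finsum_eq_finsum_update {α β M : Type*} [DecidableEq α] [AddCommMonoid M]
    {f : (α → β) → M} (ρ : α → β) (k : α) (h : ∀ σ, f σ ≠ 0 → ∀ j, j ≠ k → σ j = ρ j) :
    ∑ᶠ σ, f σ = ∑ᶠ t, f (Function.update ρ k t) := by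
  rw [← finsum_mem_range (Function.update_injective ρ k),
    finsum_mem_eq_finsum_of_support_subset]
  exact fun σ hσ => ⟨σ k, (Function.eq_update_iff.2 ⟨rfl, h σ hσ⟩).symm⟩

open Fin.NatCast in
lemma Fin.natCast_ne_natCast_of_le {L w w' : ℕ} (hw : w ≤ L) (hw' : w' ≤ L) (h : w ≠ w') :
    (w : Fin (L + 1)) ≠ w' := fun hc => h <| by
  simpa [Fin.val_cast_of_lt (Nat.lt_succ_of_le hw), Fin.val_cast_of_lt (Nat.lt_succ_of_le hw')]
    using congrArg Fin.val hc

namespace TensorSystem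

variable {R : Type*} [CommRing R] {I : Type*} (TS : TensorSystem R I)

def channels (a b : I) : Finset I := (TS.N_finite a b).toFinset

variable {TS}

@[simp]
lemma mem_channels {a b c : I} : c ∈ TS.channels a b ↔ TS.N a b c ≠ 0 := by
  simp [channels]

lemma mem_channels_of_eq_one {a b c : I} (h : TS.N a b c = 1) : c ∈ TS.channels a b := by
  simp [h]

section

variable {a b c d e f g h k l : I}

lemma N_eq_one_of_mul_ne_zero (h : TS.N a b e * TS.N b c f * TS.N a f d * TS.N e c d ≠ 0) :
    TS.N a b e = 1 ∧ TS.N b c f = 1 ∧ TS.N a f d = 1 ∧ TS.N e c d = 1 := by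
  have := TS.N_le_one a b e; have := TS.N_le_one b c f
  have := TS.N_le_one a f d; have := TS.N_le_one e c d
  simp only [ne_eq, mul_eq_zero, not_or] at h
  omega

lemma N_eq_one_of_F_ne_zero (h : TS.F a b c d e f ≠ 0) :
    TS.N a b e = 1 ∧ TS.N b c f = 1 ∧ TS.N a f d = 1 ∧ TS.N e c d = 1 :=
  N_eq_one_of_mul_ne_zero (mt (TS.F_vanish a b c d e f) h)

lemma N_eq_one_of_Fbar_ne_zero (h : TS.Fbar a b c d f e ≠ 0) :
    TS.N a b e = 1 ∧ TS.N b c f = 1 ∧ TS.N a f d = 1 ∧ TS.N e c d = 1 :=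
  N_eq_one_of_mul_ne_zero (mt (TS.Fbar_vanish a b c d e f) h)

lemma sum_F_mul_Fbar {S : Finset I} (hS : TS.channels b c ⊆ S) (e' : I) :
    ∑ f ∈ S, TS.F a b c d e f * TS.Fbar a b c d f e' =
      (if e = e' then 1 else 0) * (TS.N a b e : R) * (TS.N e c d : R) := by
  rw [← TS.F_Fbar, finsum_eq_sum_of_support_subset]
  exact fun f hf => hS (mem_channels_of_eq_one (N_eq_one_of_F_ne_zero (left_ne_zero_of_mul hf)).2.1)

lemma sum_Fbar_mul_F {S : Finset I} (hS : TS.channels a b ⊆ S) (f' : I) :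
    ∑ e ∈ S, TS.Fbar a b c d f' e * TS.F a b c d e f =
      (if f = f' then 1 else 0) * (TS.N b c f : R) * (TS.N a f d : R) := by
  rw [← TS.Fbar_F, finsum_eq_sum_of_support_subset]
  exact fun e he => hS (mem_channels_of_eq_one (N_eq_one_of_F_ne_zero (right_ne_zero_of_mul he)).1)

lemma sum_pentagon {S : Finset I} (hS : TS.channels b c ⊆ S) :
    ∑ h ∈ S, TS.F a b c g f h * TS.F a h d e g k * TS.F b c d k h l =
      TS.F f c d e g l * TS.F a b l e f k := by
  rw [← TS.pentagon, finsum_eq_sum_of_support_subset]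
  exact fun h hh => hS (mem_channels_of_eq_one
    (N_eq_one_of_F_ne_zero (left_ne_zero_of_mul (left_ne_zero_of_mul hh))).2.1)

/- In the pentagon `M = A B C`, `M` is the double F-move `((ab)c)d → a(b(cd))` on the right-hand
side and `A`, `B`, `C` are the three moves on the left; bars denote inverses. The next lemmas are
`M C̄ = A B`, `Ā M = B C`, `M̄ M = 1` (on admissible labels), `M C̄ B̄ = A` and the inverse
pentagon `M̄ A = C̄ B̄`, with the sums running over any finite set containing the fusion channels
involved. -/

lemma sum_pentagon_mul_Fbar {S : Finset I} (hS : TS.channels c d ⊆ S) :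
    ∑ l ∈ S, TS.F f c d e g l * TS.F a b l e f k * TS.Fbar b c d k l h =
      TS.F a b c g f h * TS.F a h d e g k := by
  calc _ = ∑ l ∈ S, ∑ h' ∈ TS.channels b c,
          TS.F a b c g f h' * TS.F a h' d e g k * (TS.F b c d k h' l * TS.Fbar b c d k l h) := by
        refine Finset.sum_congr rfl fun l _ => ?_
        rw [← sum_pentagon subset_rfl, Finset.sum_mul]
        simp only [mul_assoc]
    _ = ∑ h' ∈ TS.channels b c, TS.F a b c g f h' * TS.F a h' d e g k *
          ((if h' = h then 1 else 0) * (TS.N b c h' : R) * (TS.N h' d k : R)) := by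
        rw [Finset.sum_comm]
        simp only [← Finset.mul_sum, sum_F_mul_Fbar hS]
    _ = _ := Finset.sum_mul_ite_eq_of_natCast_eq_one
          (fun h' => TS.F a b c g f h' * TS.F a h' d e g k) _ _ h fun hX => by
        have h1 := N_eq_one_of_F_ne_zero (left_ne_zero_of_mul hX)
        have h2 := N_eq_one_of_F_ne_zero (right_ne_zero_of_mul hX)
        exact ⟨mem_channels_of_eq_one h1.2.1, h1.2.1, h2.2.1⟩

lemma sum_Fbar_mul_pentagon {S : Finset I} (hS : TS.channels a b ⊆ S) :
    ∑ f ∈ S, TS.Fbar a b c g h f * (TS.F f c d e g l * TS.F a b l e f k) =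
      TS.F a h d e g k * TS.F b c d k h l := by
  calc _ = ∑ f ∈ S, ∑ h' ∈ TS.channels b c,
          TS.F a h' d e g k * TS.F b c d k h' l * (TS.Fbar a b c g h f * TS.F a b c g f h') := by
        refine Finset.sum_congr rfl fun f _ => ?_
        rw [← sum_pentagon subset_rfl, Finset.mul_sum]
        exact Finset.sum_congr rfl fun _ _ => by ring
    _ = ∑ h' ∈ TS.channels b c, TS.F a h' d e g k * TS.F b c d k h' l *
          ((if h' = h then 1 else 0) * (TS.N b c h' : R) * (TS.N a h' g : R)) := by
        rw [Finset.sum_comm]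
        simp only [← Finset.mul_sum, sum_Fbar_mul_F hS]
    _ = _ := Finset.sum_mul_ite_eq_of_natCast_eq_one
          (fun h' => TS.F a h' d e g k * TS.F b c d k h' l) _ _ h fun hX => by
        have h1 := N_eq_one_of_F_ne_zero (left_ne_zero_of_mul hX)
        have h2 := N_eq_one_of_F_ne_zero (right_ne_zero_of_mul hX)
        exact ⟨mem_channels_of_eq_one h2.1, h2.1, h1.1⟩

lemma sum_Fbar_mul_Fbar_mul_F_mul_F {Sf Sg : Finset I} (hSf : TS.channels a b ⊆ Sf)
    (hSg : ∀ f ∈ TS.channels a b, TS.channels f c ⊆ Sg) (k' l' : I) :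
    ∑ f ∈ Sf, ∑ g ∈ Sg, TS.Fbar a b l e k f * TS.Fbar f c d e l g *
        (TS.F f c d e g l' * TS.F a b l' e f k') =
      if k' = k ∧ l' = l then (TS.N c d l : R) * TS.N b l k * TS.N a k e else 0 := by
  calc _ = ∑ f ∈ Sf, TS.Fbar a b l e k f * TS.F a b l' e f k' *
          ((if l' = l then 1 else 0) * (TS.N c d l' : R) * (TS.N f l' e : R)) := by
        refine Finset.sum_congr rfl fun f _ => ?_
        by_cases hf : TS.Fbar a b l e k f = 0
        · simp [hf]
        rw [← sum_Fbar_mul_F (hSg f (mem_channels_of_eq_one (N_eq_one_of_Fbar_ne_zero hf).1)),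
          Finset.mul_sum]
        exact Finset.sum_congr rfl fun _ _ => by ring
    _ = _ := by
        by_cases hl : l' = l
        · subst hl
          calc _ = (TS.N c d l' : R) * ∑ f ∈ Sf, TS.Fbar a b l' e k f * TS.F a b l' e f k' := by
                rw [Finset.mul_sum]
                refine Finset.sum_congr rfl fun f _ => ?_
                have hN := natCast_mul_eq_self_of_imp (n := TS.N f l' e) (r := TS.Fbar a b l' e k f)
                  fun hF => (N_eq_one_of_Fbar_ne_zero hF).2.2.2
                rw [if_pos rfl]
                linear_combination (TS.N c d l' : R) * TS.F a b l' e f k' * hN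
            _ = _ := by
                rw [sum_Fbar_mul_F hSf]
                by_cases hk : k' = k <;> simp [hk, mul_assoc]
        · simp [hl]

lemma sum_pentagon_mul_Fbar_mul_Fbar {Sk Sl : Finset I} (hSk : TS.channels h d ⊆ Sk)
    (hSl : TS.channels c d ⊆ Sl) (g' : I) :
    ∑ k ∈ Sk, ∑ l ∈ Sl, TS.F f c d e g' l * TS.F a b l e f k *
        (TS.Fbar b c d k l h * TS.Fbar a h d e k g) =
      if g' = g then (TS.N g d e : R) * TS.F a b c g f h else 0 := by
  calc _ = ∑ k ∈ Sk, TS.F a b c g' f h * (TS.F a h d e g' k * TS.Fbar a h d e k g) := by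
        refine Finset.sum_congr rfl fun k _ => ?_
        simp only [← mul_assoc]
        rw [← Finset.sum_mul, sum_pentagon_mul_Fbar hSl, mul_assoc]
    _ = _ := by
        rw [← Finset.mul_sum, sum_F_mul_Fbar hSk]
        split_ifs with hg
        · subst hg
          rw [one_mul, mul_comm, mul_assoc, mul_left_comm, natCast_mul_eq_self_of_imp
            fun hA => (N_eq_one_of_F_ne_zero hA).2.2.1]
        · simp

lemma sum_Fbar_mul_Fbar_mul_F {S : Finset I} (hS : TS.channels a b ⊆ S) :
    ∑ f ∈ S, TS.Fbar a b l e k f * TS.Fbar f c d e l g * TS.F a b c g f h =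
      TS.Fbar b c d k l h * TS.Fbar a h d e k g := by
  -- `M̄ A = M̄ (M C̄ B̄) = (M̄ M) C̄ B̄`
  set Sg := (TS.channels a b).biUnion fun f => TS.channels f c
  have hSg : ∀ f ∈ TS.channels a b, TS.channels f c ⊆ Sg := fun f hf =>
    Finset.subset_biUnion_of_mem (fun f => TS.channels f c) hf
  calc _ = ∑ f ∈ S, ∑ g' ∈ Sg, TS.Fbar a b l e k f * TS.Fbar f c d e l g' *
          ∑ k' ∈ TS.channels h d, ∑ l' ∈ TS.channels c d, TS.F f c d e g' l' * TS.F a b l' e f k' *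
            (TS.Fbar b c d k' l' h * TS.Fbar a h d e k' g) := by
        refine Finset.sum_congr rfl fun f _ => ?_
        simp only [sum_pentagon_mul_Fbar_mul_Fbar subset_rfl subset_rfl, mul_ite, mul_zero,
          Finset.sum_ite_eq']
        by_cases hz : TS.Fbar a b l e k f * TS.Fbar f c d e l g * TS.F a b c g f h = 0
        · split_ifs
          · linear_combination (1 - (TS.N g d e : R)) * hz
          · exact hz
        have h1 := N_eq_one_of_Fbar_ne_zero (left_ne_zero_of_mul (left_ne_zero_of_mul hz))
        have h2 := N_eq_one_of_Fbar_ne_zero (right_ne_zero_of_mul (left_ne_zero_of_mul hz))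
        rw [if_pos (hSg f (mem_channels_of_eq_one h1.1) (mem_channels_of_eq_one h2.1)), h2.2.2.2]
        ring
    _ = ∑ k' ∈ TS.channels h d, ∑ l' ∈ TS.channels c d,
          (∑ f ∈ S, ∑ g' ∈ Sg, TS.Fbar a b l e k f * TS.Fbar f c d e l g' *
            (TS.F f c d e g' l' * TS.F a b l' e f k')) *
          (TS.Fbar b c d k' l' h * TS.Fbar a h d e k' g) := by
        simp only [Finset.mul_sum, Finset.sum_mul, mul_assoc]
        exact Finset.sum_comm₄ _ _ _ _ _
    _ = _ := by
        simp only [sum_Fbar_mul_Fbar_mul_F_mul_F hS hSg, ite_and, ite_mul, zero_mul,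
          Finset.sum_ite_eq', Finset.sum_ite_irrel, Finset.sum_const_zero]
        by_cases hz : TS.Fbar b c d k l h * TS.Fbar a h d e k g = 0
        · simp [hz]
        have h1 := N_eq_one_of_Fbar_ne_zero (left_ne_zero_of_mul hz)
        have h2 := N_eq_one_of_Fbar_ne_zero (right_ne_zero_of_mul hz)
        simp [h1.2.1, h1.2.2.1, h1.2.2.2, h2.2.2.1]

lemma eq_of_actsOneDimLeft {ν z φ k : I} (hone : TS.ActsOneDimLeft ν z)
    (hφ : TS.N ν z φ = 1) (hk : TS.N ν z k ≠ 0) : k = φ := by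
  by_contra hne
  have hsum : ∑ μ ∈ TS.channels ν z, TS.N ν z μ = 1 := by
    rw [← show (∑ᶠ μ, TS.N ν z μ) = 1 from hone, finsum_eq_sum_of_support_subset]
    exact fun μ hμ => mem_channels.2 hμ
  have := Finset.add_le_sum (fun μ _ => Nat.zero_le (TS.N ν z μ)) (mem_channels.2 hk)
    (mem_channels_of_eq_one hφ) hne
  omega

lemma F_mul_Fbar_of_unique {φ : I} (huniq : ∀ k, TS.N b c k ≠ 0 → k = φ) (e' : I) :
    TS.F a b c d e φ * TS.Fbar a b c d φ e' =
      (if e = e' then 1 else 0) * (TS.N a b e : R) * (TS.N e c d : R) := by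
  rw [← sum_F_mul_Fbar (S := {φ}) fun k hk => by simp [huniq k (mem_channels.1 hk)],
    Finset.sum_singleton]

lemma sum_Fbar_mul_Fbar_mul_F_mul_F_of_unique {a x y z e s b ν ν' φ : I}
    (huniq : ∀ k, TS.N ν z k ≠ 0 → k = φ) :
    ∑ k ∈ TS.channels x ν', TS.Fbar x y z k ν' ν * TS.Fbar a ν z e k s *
        (TS.F a ν z e b k * TS.F x y z k ν ν') =
      TS.F x y z φ ν ν' * TS.Fbar x y z φ ν' ν *
        ((if b = s then 1 else 0) * (TS.N a ν b : R) * (TS.N b z e : R)) := by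
  rw [← F_mul_Fbar_of_unique (a := a) (d := e) (e := b) huniq s, Finset.sum_eq_single φ]
  · ring
  · intro k _ hk
    have hF : TS.F x y z k ν ν' = 0 := by
      by_contra hF
      exact hk (huniq k (by simp [(N_eq_one_of_F_ne_zero hF).2.2.2]))
    simp [hF]
  · intro hφ
    have hF : TS.F x y z φ ν ν' = 0 := by
      by_contra hF
      exact hφ (mem_channels_of_eq_one (N_eq_one_of_F_ne_zero hF).2.2.1)
    simp [hF]

lemma finsum_F_mul_Fbar_mul_F_mul_Fbar {a x y z e s b ν ν' φ : I}
    (huniq : ∀ k, TS.N ν z k ≠ 0 → k = φ) :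
    ∑ᶠ t, TS.F a x y s t ν * TS.Fbar t y z e ν' s * TS.F t y z e b ν' * TS.Fbar a x y b ν t =
      TS.F x y z φ ν ν' * TS.Fbar x y z φ ν' ν *
        ((if b = s then 1 else 0) * (TS.N a ν b : R) * (TS.N b z e : R)) := by
  calc _ = ∑ t ∈ TS.channels a x, ∑ t' ∈ TS.channels a x,
          TS.Fbar t y z e ν' s * TS.F a x y s t ν * (TS.Fbar a x y b ν t' * TS.F t' y z e b ν') *
            ((if t' = t then 1 else 0) * (TS.N a x t' : R) * (TS.N t' ν' e : R)) := by
        rw [finsum_eq_sum_of_support_subset (s := TS.channels a x) _ fun t ht =>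
          mem_channels_of_eq_one (N_eq_one_of_F_ne_zero (left_ne_zero_of_mul
            (left_ne_zero_of_mul (left_ne_zero_of_mul ht)))).1]
        refine Finset.sum_congr rfl fun t _ => ?_
        rw [Finset.sum_mul_ite_eq_of_natCast_eq_one (fun t' => TS.Fbar t y z e ν' s *
          TS.F a x y s t ν * (TS.Fbar a x y b ν t' * TS.F t' y z e b ν')) _ _ t fun hX => ?_]
        · ring
        have h1 := N_eq_one_of_F_ne_zero (right_ne_zero_of_mul (left_ne_zero_of_mul hX))
        have h2 := N_eq_one_of_Fbar_ne_zero (left_ne_zero_of_mul (left_ne_zero_of_mul hX))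
        exact ⟨mem_channels_of_eq_one h1.1, h1.1, h2.2.2.1⟩
    _ = ∑ t ∈ TS.channels a x, ∑ t' ∈ TS.channels a x, ∑ k ∈ TS.channels x ν',
          TS.Fbar a x ν' e k t * TS.Fbar t y z e ν' s * TS.F a x y s t ν *
            (TS.Fbar a x y b ν t' * (TS.F t' y z e b ν' * TS.F a x ν' e t' k)) := by
        simp only [← sum_F_mul_Fbar (S := TS.channels x ν') subset_rfl, Finset.mul_sum]
        refine Finset.sum_congr rfl fun t _ => Finset.sum_congr rfl fun t' _ =>
          Finset.sum_congr rfl fun k _ => by ring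
    _ = ∑ k ∈ TS.channels x ν',
          (∑ t ∈ TS.channels a x, TS.Fbar a x ν' e k t * TS.Fbar t y z e ν' s * TS.F a x y s t ν) *
          ∑ t' ∈ TS.channels a x,
            TS.Fbar a x y b ν t' * (TS.F t' y z e b ν' * TS.F a x ν' e t' k) := by
        simp only [Finset.sum_mul_sum]
        conv_rhs => rw [Finset.sum_comm]
        exact Finset.sum_congr rfl fun t _ => Finset.sum_comm
    _ = ∑ k ∈ TS.channels x ν', TS.Fbar x y z k ν' ν * TS.Fbar a ν z e k s *
          (TS.F a ν z e b k * TS.F x y z k ν ν') := by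
        simp only [sum_Fbar_mul_Fbar_mul_F subset_rfl, sum_Fbar_mul_pentagon subset_rfl]
    _ = _ := sum_Fbar_mul_Fbar_mul_F_mul_F_of_unique huniq

end

section

open Fin.NatCast

variable {L : ℕ} {I0 : Set I} {lam : ℕ → I}

def FixesSite (A : (Fin (L + 1) → I) → (Fin (L + 1) → I) → R) (j : Fin (L + 1)) : Prop :=
  ∀ ρ σ, A ρ σ ≠ 0 → σ j = ρ j

lemma FixesSite.eq_zero {A : (Fin (L + 1) → I) → (Fin (L + 1) → I) → R} {j : Fin (L + 1)}
    (hA : FixesSite A j) {ρ σ : Fin (L + 1) → I} (h : σ j ≠ ρ j) : A ρ σ = 0 :=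
  by_contra fun hne => h (hA ρ σ hne)

lemma FixesSite.mulMat {A B : (Fin (L + 1) → I) → (Fin (L + 1) → I) → R} {j : Fin (L + 1)}
    (hA : FixesSite A j) (hB : FixesSite B j) : FixesSite (TS.mulMat L I0 lam A B) j := by
  intro ρ σ h
  obtain ⟨τ, -, hτ⟩ := exists_ne_zero_of_finsum_mem_ne_zero h
  rw [hB τ σ (right_ne_zero_of_mul hτ), hA ρ τ (left_ne_zero_of_mul hτ)]

lemma fixesSite_pMat {k : ℕ} {ν : I} {j : Fin (L + 1)} (hj : j ≠ k) :
    FixesSite (TS.pMat L lam k ν) j := by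
  intro ρ σ h
  by_contra hne
  exact h (by rw [pMat, Finset.prod_eq_zero (Finset.mem_erase.2 ⟨hj, Finset.mem_univ j⟩)
    (if_neg hne), zero_mul, zero_mul])

lemma pMat_eq_of_agree_off_site {k : ℕ} {ν : I} {ρ σ : Fin (L + 1) → I}
    (h : ∀ j : Fin (L + 1), j ≠ k → σ j = ρ j) :
    TS.pMat L lam k ν ρ σ =
      TS.Fbar (σ (k - 1 : ℕ)) (lam k) (lam (k + 1)) (σ (k + 1 : ℕ)) ν (ρ k) *
        TS.F (σ (k - 1 : ℕ)) (lam k) (lam (k + 1)) (σ (k + 1 : ℕ)) (σ k) ν := by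
  rw [pMat, Finset.prod_eq_one fun j hj => if_pos (h j (Finset.mem_erase.1 hj).1), one_mul]

lemma IsPath.update {ρ : Fin (L + 1) → I} (hρ : TS.IsPath L I0 lam ρ) {k : ℕ} (hk : 1 ≤ k)
    (hkL : k + 1 ≤ L) {t : I} (h₁ : TS.N (ρ (k - 1 : ℕ)) (lam k) t = 1)
    (h₂ : TS.N t (lam (k + 1)) (ρ (k + 1 : ℕ)) = 1) :
    TS.IsPath L I0 lam (Function.update ρ k t) := by
  have hne : ∀ w w', w ≤ L → w' ≤ L → w ≠ w' → (w : Fin (L + 1)) ≠ w' :=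
    fun w w' hw hw' => Fin.natCast_ne_natCast_of_le hw hw'
  refine ⟨?_, fun j hj hjL => ?_⟩
  · rw [Function.update_of_ne (by simpa using hne 0 k (by omega) (by omega) (by omega))]
    exact hρ.1
  rcases (by omega : j = k ∨ j = k + 1 ∨ (j - 1 ≠ k ∧ j ≠ k)) with rfl | rfl | ⟨h1, h2⟩
  · rw [Function.update_self, Function.update_of_ne (hne _ _ (by omega) (by omega) (by omega))]
    exact h₁
  · rw [Nat.add_sub_cancel, Function.update_self,
      Function.update_of_ne (hne _ _ (by omega) (by omega) (by omega))]
    exact h₂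
  · rw [Function.update_of_ne (hne _ _ (by omega) (by omega) h1),
      Function.update_of_ne (hne _ _ (by omega) (by omega) h2)]
    exact hρ.2 j hj hjL

lemma isPath_of_pMat_ne_zero_left {k : ℕ} (hk : 1 ≤ k) (hkL : k + 1 ≤ L) {ν : I}
    {ρ σ : Fin (L + 1) → I} (hρ : TS.IsPath L I0 lam ρ) (h : TS.pMat L lam k ν ρ σ ≠ 0) :
    TS.IsPath L I0 lam σ := by
  have hσ : ∀ j : Fin (L + 1), j ≠ k → σ j = ρ j := fun j hj => fixesSite_pMat hj ρ σ h
  rw [pMat_eq_of_agree_off_site hσ] at h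
  have hN := N_eq_one_of_F_ne_zero (right_ne_zero_of_mul h)
  rw [Function.eq_update_iff.2 ⟨rfl, hσ⟩]
  refine hρ.update hk hkL ?_ ?_
  · rw [← hσ _ (Fin.natCast_ne_natCast_of_le (by omega) (by omega) (by omega))]
    exact hN.1
  · rw [← hσ _ (Fin.natCast_ne_natCast_of_le (by omega) (by omega) (by omega))]
    exact hN.2.2.2

lemma isPath_of_pMat_ne_zero_right {k : ℕ} (hk : 1 ≤ k) (hkL : k + 1 ≤ L) {ν : I}
    {ρ σ : Fin (L + 1) → I} (hσ : TS.IsPath L I0 lam σ) (h : TS.pMat L lam k ν ρ σ ≠ 0) :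
    TS.IsPath L I0 lam ρ := by
  have hρ : ∀ j : Fin (L + 1), j ≠ k → σ j = ρ j := fun j hj => fixesSite_pMat hj ρ σ h
  rw [pMat_eq_of_agree_off_site hρ] at h
  have hN := N_eq_one_of_Fbar_ne_zero (left_ne_zero_of_mul h)
  rw [Function.eq_update_iff.2 ⟨rfl, fun j hj => (hρ j hj).symm⟩]
  exact hσ.update hk hkL hN.1 hN.2.2.2

lemma mulMat_pMat_left {k : ℕ} (hk : 1 ≤ k) (hkL : k + 1 ≤ L) (ν : I)
    (B : (Fin (L + 1) → I) → (Fin (L + 1) → I) → R) {μ' μ : Fin (L + 1) → I}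
    (hμ' : TS.IsPath L I0 lam μ') :
    TS.mulMat L I0 lam (TS.pMat L lam k ν) B μ' μ =
      ∑ᶠ t, TS.pMat L lam k ν μ' (Function.update μ' k t) * B (Function.update μ' k t) μ := by
  rw [mulMat, finsum_mem_eq_finsum_of_support_subset, finsum_eq_finsum_update μ' k]
  · exact fun σ hσ j hj => fixesSite_pMat hj μ' σ (left_ne_zero_of_mul hσ)
  · exact fun σ hσ => isPath_of_pMat_ne_zero_left hk hkL hμ' (left_ne_zero_of_mul hσ)

lemma mulMat_pMat_right {k : ℕ} (hk : 1 ≤ k) (hkL : k + 1 ≤ L) (ν : I)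
    (A : (Fin (L + 1) → I) → (Fin (L + 1) → I) → R) {μ' μ : Fin (L + 1) → I}
    (hμ : TS.IsPath L I0 lam μ) :
    TS.mulMat L I0 lam A (TS.pMat L lam k ν) μ' μ =
      ∑ᶠ t, A μ' (Function.update μ k t) * TS.pMat L lam k ν (Function.update μ k t) μ := by
  rw [mulMat, finsum_mem_eq_finsum_of_support_subset, finsum_eq_finsum_update μ k]
  · exact fun σ hσ j hj => (fixesSite_pMat hj σ μ (right_ne_zero_of_mul hσ)).symm
  · exact fun σ hσ => isPath_of_pMat_ne_zero_right hk hkL hμ (right_ne_zero_of_mul hσ)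

lemma mulMat_pMat_of_fixesSite {k : ℕ} (hk : 1 ≤ k) (hkL : k + 1 ≤ L) (ν : I)
    {A : (Fin (L + 1) → I) → (Fin (L + 1) → I) → R} (hA : FixesSite A k)
    {ρ μ : Fin (L + 1) → I} (hμ : TS.IsPath L I0 lam μ) :
    TS.mulMat L I0 lam A (TS.pMat L lam k ν) ρ μ =
      A ρ (Function.update μ k (ρ k)) * TS.pMat L lam k ν (Function.update μ k (ρ k)) μ := by
  rw [mulMat_pMat_right hk hkL ν A hμ]
  exact finsum_eq_single _ _ fun t ht => by rw [hA.eq_zero (by simpa using ht), zero_mul]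

lemma mulMat_pMat_mulMat_pMat_pMat_apply {i : ℕ} (hi : 1 ≤ i) (hiL : i + 2 ≤ L) (ν ν' : I)
    {μ' μ : Fin (L + 1) → I} (hμ' : TS.IsPath L I0 lam μ') (hμ : TS.IsPath L I0 lam μ)
    (hagree : ∀ j : Fin (L + 1), j ≠ i → j ≠ (i + 1 : ℕ) → μ j = μ' j) :
    TS.mulMat L I0 lam (TS.pMat L lam i ν)
        (TS.mulMat L I0 lam (TS.pMat L lam (i + 1) ν') (TS.pMat L lam i ν)) μ' μ =
      TS.Fbar (μ (i - 1 : ℕ)) (lam i) (lam (i + 1)) (μ' (i + 1 : ℕ)) ν (μ' i) *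
        TS.F (μ (i - 1 : ℕ)) (lam i) (lam (i + 1)) (μ (i + 1 : ℕ)) (μ i) ν *
      ∑ᶠ t, TS.F (μ (i - 1 : ℕ)) (lam i) (lam (i + 1)) (μ' (i + 1 : ℕ)) t ν *
        TS.Fbar t (lam (i + 1)) (lam (i + 2)) (μ (i + 2 : ℕ)) ν' (μ' (i + 1 : ℕ)) *
        TS.F t (lam (i + 1)) (lam (i + 2)) (μ (i + 2 : ℕ)) (μ (i + 1 : ℕ)) ν' *
        TS.Fbar (μ (i - 1 : ℕ)) (lam i) (lam (i + 1)) (μ (i + 1 : ℕ)) ν t := by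
  have hne : ∀ w w', w ≤ L → w' ≤ L → w ≠ w' → (w : Fin (L + 1)) ≠ w' :=
    fun w w' hw hw' => Fin.natCast_ne_natCast_of_le hw hw'
  have h01 := hne (i - 1) i (by omega) (by omega) (by omega)
  have h21 := hne (i + 1) i (by omega) (by omega) (by omega)
  have h31 := hne (i + 2) i (by omega) (by omega) (by omega)
  have h02 := hne (i - 1) (i + 1) (by omega) (by omega) (by omega)
  rw [mulMat_pMat_left hi (by omega) _ _ hμ', finsum_congr fun t => by
      rw [mulMat_pMat_of_fixesSite hi (by omega) ν (fixesSite_pMat h21.symm) hμ,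
        Function.update_self],
    mul_finsum' _ _ ((TS.N_finite (μ (i - 1 : ℕ)) (lam i)).subset fun t ht => ?_)]
  · refine finsum_congr fun t => ?_
    rw [pMat_eq_of_agree_off_site fun j hj => Function.update_of_ne hj _ _,
      pMat_eq_of_agree_off_site fun j hj => (Function.update_of_ne hj _ _).symm,
      pMat_eq_of_agree_off_site ?_]
    · simp only [show i + 1 + 1 = i + 2 from rfl, Nat.add_sub_cancel, Function.update_apply,
        h01, h21, h31, hagree _ h01 h02, if_true, if_false]
      ring
    intro j hj
    by_cases hji : j = i
    · simp [hji]
    · rw [Function.update_of_ne hji, Function.update_of_ne hji, hagree j hji hj]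
  have hF := left_ne_zero_of_mul (left_ne_zero_of_mul (left_ne_zero_of_mul ht))
  simp [(N_eq_one_of_F_ne_zero hF).1]

lemma pMat_eq_of_agree_off_two_sites {i : ℕ} (hiL : i + 2 ≤ L) (ν : I)
    {μ' μ : Fin (L + 1) → I} (hμ : TS.IsPath L I0 lam μ)
    (hagree : ∀ j : Fin (L + 1), j ≠ i → j ≠ (i + 1 : ℕ) → μ j = μ' j) :
    TS.pMat L lam i ν μ' μ =
      TS.Fbar (μ (i - 1 : ℕ)) (lam i) (lam (i + 1)) (μ' (i + 1 : ℕ)) ν (μ' i) *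
        TS.F (μ (i - 1 : ℕ)) (lam i) (lam (i + 1)) (μ (i + 1 : ℕ)) (μ i) ν *
      ((if μ (i + 1 : ℕ) = μ' (i + 1 : ℕ) then 1 else 0) *
        (TS.N (μ (i - 1 : ℕ)) ν (μ (i + 1 : ℕ)) : R) *
        (TS.N (μ (i + 1 : ℕ)) (lam (i + 2)) (μ (i + 2 : ℕ)) : R)) := by
  by_cases hs : μ (i + 1 : ℕ) = μ' (i + 1 : ℕ)
  · have hagree' : ∀ j : Fin (L + 1), j ≠ i → μ j = μ' j := fun j hji => by
      by_cases hj : j = (i + 1 : ℕ)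
      · rw [hj, hs]
      · exact hagree j hji hj
    have hN : TS.N (μ (i + 1 : ℕ)) (lam (i + 2)) (μ (i + 2 : ℕ)) = 1 := hμ.2 (i + 2) (by omega) hiL
    have hA := natCast_mul_eq_self_of_imp (n := TS.N (μ (i - 1 : ℕ)) ν (μ (i + 1 : ℕ)))
      (r := TS.F (μ (i - 1 : ℕ)) (lam i) (lam (i + 1)) (μ (i + 1 : ℕ)) (μ i) ν)
      fun hF => (N_eq_one_of_F_ne_zero hF).2.2.1
    rw [pMat_eq_of_agree_off_site hagree', ← hs, if_pos rfl, hN]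
    linear_combination
      -TS.Fbar (μ (i - 1 : ℕ)) (lam i) (lam (i + 1)) (μ (i + 1 : ℕ)) ν (μ' i) * hA
  · rw [if_neg hs, (fixesSite_pMat (Fin.natCast_ne_natCast_of_le (by omega) (by omega)
      (by omega : i + 1 ≠ i))).eq_zero hs]
    ring

end

end TensorSystem

theorem TL_like_from_one_dim_left_general
    {R : Type*} [CommRing R] {I : Type*}
    (TS : TensorSystem R I) (L : ℕ) (I0 : Set I)
    (lam : ℕ → I) (ν : I) (i : ℕ) (hi : 1 ≤ i) (hiL : i + 2 ≤ L)
    (hone : TS.ActsOneDimLeft ν (lam (i + 2)))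
    (φ : I) (hφ : TS.N ν (lam (i + 2)) φ = 1) (ν' : I) :
    TS.MatEqOn L I0 lam
      (TS.mulMat L I0 lam
      (TS.pMat L lam (i) ν)
      (TS.mulMat L I0 lam
      (TS.pMat L lam (i + 1) ν')
      (TS.pMat L lam (i) ν)))
      (smulMat (TS.F (lam i) (lam (i + 1)) (lam (i + 2)) φ ν ν'
          * TS.Fbar (lam i) (lam (i + 1)) (lam (i + 2)) φ ν' ν)
        (TS.pMat L lam (i) ν)) := by
  open TensorSystem Fin.NatCast in
  intro μ' μ hμ' hμ
  simp only [smulMat]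
  by_cases hagree : ∀ j : Fin (L + 1), j ≠ i → j ≠ (i + 1 : ℕ) → μ j = μ' j
  · rw [mulMat_pMat_mulMat_pMat_pMat_apply hi hiL ν ν' hμ' hμ hagree,
      finsum_F_mul_Fbar_mul_F_mul_Fbar fun k hk => eq_of_actsOneDimLeft hone hφ hk,
      pMat_eq_of_agree_off_two_sites hiL ν hμ hagree]
    ring
  · push Not at hagree
    obtain ⟨j, hji, hji1, hj⟩ := hagree
    have hfix := fixesSite_pMat (TS := TS) (lam := lam) (ν := ν) hji
    rw [(hfix.mulMat ((fixesSite_pMat hji1).mulMat hfix)).eq_zero hj, hfix.eq_zero hj, mul_zero]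

/-- if `ν` acts one-dimensionally on the left of `λ_{i+2}` then
`p_i^{(ν)} p_{i+1}^{(ν')} p_i^{(ν)}` is the stated multiple of `p_i^{(ν)}`. -/
theorem TL_like_from_one_dim_left
    {R : Type*} [CommRing R] {I : Type*}
    (TS : TensorSystem R I) (L : ℕ) (I0 : Set I) (hI0 : I0.Finite)
    (lam : ℕ → I) (ν : I) (i : ℕ) (hi : 1 ≤ i) (hiL : i + 2 ≤ L)
    (hone : TS.ActsOneDimLeft ν (lam (i + 2)))
    (φ : I) (hφ : TS.N ν (lam (i + 2)) φ = 1) (ν' : I) :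
    TS.MatEqOn L I0 lam
      (TS.mulMat L I0 lam
      (TS.pMat L lam (i) ν)
      (TS.mulMat L I0 lam
      (TS.pMat L lam (i + 1) ν')
      (TS.pMat L lam (i) ν)))
      (smulMat (TS.F (lam i) (lam (i + 1)) (lam (i + 2)) φ ν ν'
          * TS.Fbar (lam i) (lam (i + 1)) (lam (i + 2)) φ ν' ν)
        (TS.pMat L lam (i) ν)) :=
  TL_like_from_one_dim_left_general TS L I0 lam ν i hi hiL hone φ hφ ν'
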